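/- Let b > 0 and let M be a d × d real symmetric positive definite matrix with tr(M) < b. Then 0 ≤ −ln(det M) − b ln(1 − tr(M)/b) + (b + d) ln(b/(b + d)) ≤ tr(M)/(1 − tr(M)/b)² − 2d/(1 − tr(M)/b) + tr(M⁻¹). -/

import Mathlib

/-!
Diagonalising `M` reduces everything to its eigenvalues `λᵢ > 0`; write `s = ∑ λᵢ`,
`t = ∑ λᵢ⁻¹`, `y = 1 - s / b` and `c = b / (b + d)`. Both bounds come from the tangent-line
inequality `log x ≤ log c + x / c - 1`. Applied at `c` to every `λᵢ` and, with weight `b`, to `y`,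
it gives the lower bound, because `∑ λᵢ + b y = b = (b + d) c`. Applied at `λᵢ` to `y` and, with
weight `b + d`, at `y` to `c`, it bounds the free energy by `t y - 2d + s / y`; the gap between
this and the claimed bound is `(s / b) (s / y² - 2d / y + t)`, which is nonnegative because
`d² ≤ s t` by Cauchy–Schwarz.
-/

open Real Finset

theorem Real.log_le_log_add_div_sub_one {x c : ℝ} (hx : 0 < x) (hc : 0 < c) :
    log x ≤ log c + x / c - 1 := by
  have h := log_le_sub_one_of_pos (div_pos hx hc)
  rw [log_div hx.ne' hc.ne'] at h
  linarith

theorem two_mul_div_le_div_sq_add {n s t y : ℝ} (hs : 0 ≤ s) (ht : 0 ≤ t) (hnst : n ^ 2 ≤ s * t)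
    (hy : 0 < y) : 2 * n / y ≤ s / y ^ 2 + t := by
  have hsq : 2 * n * y ≤ s + t * y ^ 2 := by
    refine le_of_sq_le_sq ?_ (by positivity)
    nlinarith [sq_nonneg (s - t * y ^ 2), mul_le_mul_of_nonneg_right hnst (sq_nonneg y)]
  rw [div_add' _ _ _ (by positivity), div_le_div_iff₀ hy (by positivity)]
  nlinarith

theorem Matrix.IsHermitian.trace_inv {𝕜 n : Type*} [RCLike 𝕜] [Fintype n] [DecidableEq n]
    {A : Matrix n n 𝕜} (hA : A.IsHermitian) (h : ∀ i, hA.eigenvalues i ≠ 0) :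
    A⁻¹.trace = ∑ i, ((hA.eigenvalues i)⁻¹ : 𝕜) := by
  set conj := Unitary.conjStarAlgAut 𝕜 (Matrix n n 𝕜) hA.eigenvectorUnitary
  have hinv : conj (Matrix.diagonal fun i ↦ ((hA.eigenvalues i)⁻¹ : 𝕜)) * A = 1 := by
    conv_lhs => enter [2]; rw [hA.spectral_theorem]
    rw [← map_mul, Matrix.diagonal_mul_diagonal, ← map_one conj, ← Matrix.diagonal_one]
    congr 2
    funext i
    simp [h i]
  rw [Matrix.inv_eq_left_inv hinv, Unitary.conjStarAlgAut_apply, Matrix.trace_mul_cycle,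
    Unitary.coe_star_mul_self, one_mul, Matrix.trace_diagonal]

/-- The FENE-P free energy of a conformation tensor `A` of size `n` with `tr A = s` and
`log det A = l`, shifted by its value at the equilibrium `A = b / (b + n) • 1`. -/
noncomputable def fenePFreeEnergy (b n s l : ℝ) : ℝ :=
  -l - b * log (1 - s / b) + (b + n) * log (b / (b + n))

section Eigenvalues

variable {ι : Type*} [Fintype ι]

theorem sum_log_le_sum_log_add_sum_div_sub_card {x c : ι → ℝ} (hx : ∀ i, 0 < x i)
    (hc : ∀ i, 0 < c i) :
    ∑ i, log (x i) ≤ ∑ i, log (c i) + ∑ i, x i / c i - Fintype.card ι := by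
  calc ∑ i, log (x i) ≤ ∑ i, (log (c i) + x i / c i - 1) :=
        sum_le_sum fun i _ ↦ log_le_log_add_div_sub_one (hx i) (hc i)
    _ = _ := by simp [sum_add_distrib, sum_sub_distrib]

theorem card_sq_le_sum_mul_sum_inv {x : ι → ℝ} (hx : ∀ i, 0 < x i) :
    (Fintype.card ι : ℝ) ^ 2 ≤ (∑ i, x i) * ∑ i, (x i)⁻¹ := by
  simpa using sum_sq_le_sum_mul_sum_of_sq_le_mul univ (r := fun _ ↦ (1 : ℝ))
    (fun i _ ↦ (hx i).le) (fun i _ ↦ (inv_pos.mpr (hx i)).le)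
    (fun i _ ↦ (one_pow 2).trans_le (mul_inv_cancel₀ (hx i).ne').ge)

variable {b : ℝ} {x : ι → ℝ}

theorem fenePFreeEnergy_nonneg (hb : 0 < b) (hx : ∀ i, 0 < x i) (hxb : ∑ i, x i < b) :
    0 ≤ fenePFreeEnergy b (Fintype.card ι) (∑ i, x i) (∑ i, log (x i)) := by
  set n : ℝ := (Fintype.card ι : ℝ)
  set s := ∑ i, x i
  set y := 1 - s / b
  set c := b / (b + n)
  have hy : 0 < y := by rw [sub_pos, div_lt_one hb]; exact hxb
  have hc : 0 < c := by positivity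
  have hlogdet := sum_log_le_sum_log_add_sum_div_sub_card hx fun _ ↦ hc
  simp only [sum_const, card_univ, nsmul_eq_mul, ← sum_div] at hlogdet
  have hlogy := mul_le_mul_of_nonneg_left (log_le_log_add_div_sub_one hy hc) hb.le
  have hmass : s / c + b * (y / c) = b + n := by
    simp only [y, c]
    field_simp
    ring
  unfold fenePFreeEnergy
  linarith

theorem fenePFreeEnergy_le (hb : 0 < b) (hx : ∀ i, 0 < x i) (hxb : ∑ i, x i < b) :
    fenePFreeEnergy b (Fintype.card ι) (∑ i, x i) (∑ i, log (x i)) ≤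
      (∑ i, x i) / (1 - (∑ i, x i) / b) ^ 2 - 2 * Fintype.card ι / (1 - (∑ i, x i) / b) +
        ∑ i, (x i)⁻¹ := by
  set n : ℝ := (Fintype.card ι : ℝ)
  set s := ∑ i, x i
  set t := ∑ i, (x i)⁻¹
  set y := 1 - s / b
  set c := b / (b + n)
  have hs : 0 ≤ s := sum_nonneg fun i _ ↦ (hx i).le
  have ht : 0 ≤ t := sum_nonneg fun i _ ↦ (inv_pos.mpr (hx i)).le
  have hy : 0 < y := by rw [sub_pos, div_lt_one hb]; exact hxb
  have hc : 0 < c := by positivity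
  have hsy : s = b * (1 - y) := by
    simp only [y]
    field_simp
    ring
  have hlogdet := sum_log_le_sum_log_add_sum_div_sub_card (fun _ ↦ hy) hx
  simp only [sum_const, card_univ, nsmul_eq_mul, div_eq_mul_inv y, ← mul_sum] at hlogdet
  have hlogc : (b + n) * log c ≤ (b + n) * log y + s / y - n := by
    have hbn : 0 < b + n := by positivity
    have h := mul_le_mul_of_nonneg_left (log_le_log_add_div_sub_one hc hy) hbn.le
    have hcy : (b + n) * (c / y) = s / y + b := by
      rw [hsy]
      simp only [c]
      field_simp [hbn.ne']
      ring
    linarith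
  have hgap : t * y - 2 * n + s / y ≤ s / y ^ 2 - 2 * n / y + t := by
    have hid : s / y ^ 2 - 2 * n / y + t - (t * y - 2 * n + s / y) =
        s / b * (s / y ^ 2 + t - 2 * n / y) := by
      rw [hsy]
      field_simp
      ring
    have hamgm := two_mul_div_le_div_sq_add hs ht (card_sq_le_sum_mul_sum_inv hx) hy
    linarith [mul_nonneg (div_nonneg hs hb.le) (sub_nonneg.mpr hamgm)]
  unfold fenePFreeEnergy
  linarith

end Eigenvalues

/-- For `b > 0` and a `d × d` real symmetric positive definite matrix `M` with `tr(M) < b`,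
`0 ≤ −ln(det M) − b ln(1 − tr(M)/b) + (b + d) ln(b/(b + d))
   ≤ tr(M)/(1 − tr(M)/b)² − 2d/(1 − tr(M)/b) + tr(M⁻¹)`. -/
theorem fene_p_free_energy_ineq {d : ℕ} (b : ℝ) (hb : 0 < b)
    (M : Matrix (Fin d) (Fin d) ℝ) (hM : M.PosDef) (htr : M.trace < b) :
    0 ≤ -Real.log M.det - b * Real.log (1 - M.trace / b) +
        (b + d) * Real.log (b / (b + d)) ∧
      -Real.log M.det - b * Real.log (1 - M.trace / b) +
          (b + d) * Real.log (b / (b + d)) ≤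
        M.trace / (1 - M.trace / b) ^ 2 - 2 * d / (1 - M.trace / b) + M⁻¹.trace := by
  have hpos := hM.eigenvalues_pos
  have htrace : M.trace = ∑ i, hM.isHermitian.eigenvalues i := by
    simpa using hM.isHermitian.trace_eq_sum_eigenvalues
  have htrace_inv : M⁻¹.trace = ∑ i, (hM.isHermitian.eigenvalues i)⁻¹ := by
    simpa using hM.isHermitian.trace_inv fun i ↦ (hpos i).ne'
  have hlogdet : log M.det = ∑ i, log (hM.isHermitian.eigenvalues i) := by
    rw [hM.isHermitian.det_eq_prod_eigenvalues]
    simpa using log_prod fun i _ ↦ (hpos i).ne'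
  rw [htrace] at htr
  have hlower := fenePFreeEnergy_nonneg hb hpos htr
  have hupper := fenePFreeEnergy_le hb hpos htr
  rw [Fintype.card_fin] at hlower hupper
  rw [htrace, htrace_inv, hlogdet]
  exact ⟨hlower, hupper⟩
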